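/- arXiv:1210.3849 — 2 statements merged into one kernel-verified Lean document; each statement's English description precedes it below -/
import Mathlib

section
/- For every ρ > 0, the bivariate Clayton copula is 2-increasing: for all a₁, b₁, a₂, b₂ with 0 < a₁ ≤ b₁ ≤ 1 and 0 < a₂ ≤ b₂ ≤ 1 one has C(b₁,b₂) - C(a₁,b₂) - C(b₁,a₂) + C(a₁,a₂) ≥ 0. -/
/-!
Substituting `X = u ^ (-ρ)` and `Y = v ^ (-ρ)` turns the Clayton copula into `ψ (X + Y - 1)` with
`ψ t = t ^ (-1 / ρ)` convex on `(0, ∞)`, and `u ↦ u ^ (-ρ)` is antitone with values `≥ 1` on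
`(0, 1]`. The rectangle difference of `C` is then a second difference of the convex function `ψ`
at points `≥ 1`, hence nonnegative.
-/

open Set Real

theorem convexOn_rpow_of_nonpos {c : ℝ} (hc : c ≤ 0) :
    ConvexOn ℝ (Ioi 0) fun x : ℝ ↦ x ^ c := by
  have hlog : log '' Ioi 0 = univ := eq_univ_of_forall fun y ↦ ⟨exp y, exp_pos y, log_exp y⟩
  have hexp : ConvexOn ℝ (log '' Ioi 0) fun y ↦ exp (c * y) :=
    hlog ▸ convexOn_exp.comp_linearMap (LinearMap.lsmul ℝ ℝ c)
  have hanti : Antitone fun y ↦ exp (c * y) := fun a b hab ↦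
    exp_le_exp.2 (mul_le_mul_of_nonpos_left hab hc)
  refine (hexp.comp_concaveOn strictConcaveOn_log_Ioi.concaveOn (hanti.antitoneOn _)).congr
    fun x hx ↦ ?_
  simp [rpow_def_of_pos hx, mul_comm]

section

variable {𝕜 β : Type*} [Field 𝕜] [LinearOrder 𝕜] [IsStrictOrderedRing 𝕜] [AddCommGroup β]
  [PartialOrder β] [IsOrderedAddMonoid β] [Module 𝕜 β] {s : Set 𝕜} {f : 𝕜 → β}

theorem ConvexOn.map_add_add_map_le_map_add_map_add (hf : ConvexOn 𝕜 s f) {x y d : 𝕜}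
    (hx : x ∈ s) (hyd : y + d ∈ s) (hxy : x ≤ y) (hd : 0 ≤ d) :
    f (x + d) + f y ≤ f x + f (y + d) := by
  rcases hd.eq_or_lt with rfl | hd
  · simp
  have hL : 0 < y + d - x := by linarith
  set l := d / (y + d - x)
  have hl₀ : 0 ≤ l := by positivity
  have hl₁ : 0 ≤ 1 - l := by
    rw [sub_nonneg, div_le_one hL]
    linarith
  have hleft : (1 - l) • x + l • (y + d) = x + d := by
    simp only [smul_eq_mul, l]
    field_simp
    ring
  have hright : l • x + (1 - l) • (y + d) = y := by
    simp only [smul_eq_mul, l]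
    field_simp
    ring
  have h₁ := hf.2 hx hyd hl₁ hl₀ (by ring)
  have h₂ := hf.2 hx hyd hl₀ hl₁ (by ring)
  rw [hleft] at h₁
  rw [hright] at h₂
  calc f (x + d) + f y
      ≤ ((1 - l) • f x + l • f (y + d)) + (l • f x + (1 - l) • f (y + d)) := add_le_add h₁ h₂
    _ = f x + f (y + d) := by module

end

/-- For every ρ > 0, the bivariate Clayton copula
`C(u,v) = (u^{-ρ} + v^{-ρ} - 1)^{-1/ρ}` is 2-increasing on `(0,1] × (0,1]`. -/
theorem clayton_two_increasing (ρ : ℝ) (hρ : 0 < ρ)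
    (C : ℝ → ℝ → ℝ)
    (hC : ∀ u v : ℝ, C u v = (u ^ (-ρ) + v ^ (-ρ) - 1) ^ (-1 / ρ))
    (a₁ b₁ a₂ b₂ : ℝ)
    (ha₁ : 0 < a₁) (hab₁ : a₁ ≤ b₁) (hb₁ : b₁ ≤ 1)
    (ha₂ : 0 < a₂) (hab₂ : a₂ ≤ b₂) (hb₂ : b₂ ≤ 1) :
    0 ≤ C b₁ b₂ - C a₁ b₂ - C b₁ a₂ + C a₁ a₂ := by
  have hψ : ConvexOn ℝ (Ioi 0) fun t : ℝ ↦ t ^ (-1 / ρ) :=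
    convexOn_rpow_of_nonpos (div_nonpos_of_nonpos_of_nonneg (by norm_num) hρ.le)
  have hρ' : -ρ ≤ 0 := by linarith
  have hX₁ : b₁ ^ (-ρ) ≤ a₁ ^ (-ρ) := rpow_le_rpow_of_nonpos ha₁ hab₁ hρ'
  have hX₂ : b₂ ^ (-ρ) ≤ a₂ ^ (-ρ) := rpow_le_rpow_of_nonpos ha₂ hab₂ hρ'
  have h₁ : 1 ≤ b₁ ^ (-ρ) := one_le_rpow_of_pos_of_le_one_of_nonpos (ha₁.trans_le hab₁) hb₁ hρ'
  have h₂ : 1 ≤ b₂ ^ (-ρ) := one_le_rpow_of_pos_of_le_one_of_nonpos (ha₂.trans_le hab₂) hb₂ hρ'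
  have key := hψ.map_add_add_map_le_map_add_map_add
    (x := b₁ ^ (-ρ) + b₂ ^ (-ρ) - 1) (y := b₁ ^ (-ρ) + a₂ ^ (-ρ) - 1) (d := a₁ ^ (-ρ) - b₁ ^ (-ρ))
    (mem_Ioi.2 (by linarith)) (mem_Ioi.2 (by linarith)) (by linarith) (by linarith)
  simp only [hC]
  ring_nf at key ⊢
  linarith
end

section
/- For every ρ ≥ 1, the bivariate Gumbel copula is 2-increasing: for all a₁, b₁, a₂, b₂ with 0 < a₁ ≤ b₁ ≤ 1 and 0 < a₂ ≤ b₂ ≤ 1 one has C(b₁,b₂) - C(a₁,b₂) - C(b₁,a₂) + C(a₁,a₂) ≥ 0. -/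
/-!
Writing `x = (-log u)^ρ` and `y = (-log v)^ρ`, the copula becomes `φ (x + y)` with
`φ s = exp (-s^(1/ρ))`, and `u ↦ (-log u)^ρ` is antitone on `(0, 1]`. The rectangle inequality
is then the increasing-differences property of a convex function of `x + y`, and `φ` is convex
on `[0, ∞)` as an increasing convex function (`exp`) of a convex one (`-s^(1/ρ)`, as `1/ρ ≤ 1`).
-/

open Real Set

theorem ConvexOn.map_add_add_le {𝕜 : Type*} [Field 𝕜] [LinearOrder 𝕜] [IsStrictOrderedRing 𝕜]
    {s : Set 𝕜} {f : 𝕜 → 𝕜} (hf : ConvexOn 𝕜 s f) {x' x y' y : 𝕜}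
    (hx : x' ≤ x) (hy : y' ≤ y) (hlo : x' + y' ∈ s) (hhi : x + y ∈ s) :
    f (x + y') + f (x' + y) ≤ f (x' + y') + f (x + y) := by
  rcases (add_nonneg (sub_nonneg.2 hx) (sub_nonneg.2 hy)).eq_or_lt with hzero | hpos
  · have hx' : x' = x := by linarith
    have hy' : y' = y := by linarith
    rw [hx', hy']
  -- `x + y'` and `x' + y` are the convex combinations of the endpoints with swapped weights.
  set t := (y - y') / (x - x' + (y - y'))
  have ht₀ : 0 ≤ t := div_nonneg (sub_nonneg.2 hy) hpos.le
  have ht₁ : 0 ≤ 1 - t := by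
    rw [sub_nonneg, div_le_one hpos]
    linarith
  have hmid₁ : x + y' = t • (x' + y') + (1 - t) • (x + y) := by
    simp only [smul_eq_mul, t]
    field_simp
    ring
  have hmid₂ : x' + y = (1 - t) • (x' + y') + t • (x + y) := by
    simp only [smul_eq_mul, t]
    field_simp
    ring
  have h₁ := hf.2 hlo hhi ht₀ ht₁ (add_sub_cancel t 1)
  have h₂ := hf.2 hlo hhi ht₁ ht₀ (sub_add_cancel 1 t)
  rw [← hmid₁] at h₁
  rw [← hmid₂] at h₂
  simp only [smul_eq_mul] at h₁ h₂
  linarith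

theorem convexOn_exp_neg_rpow {p : ℝ} (hp₀ : 0 ≤ p) (hp₁ : p ≤ 1) :
    ConvexOn ℝ (Ici 0) fun s : ℝ ↦ exp (-s ^ p) := by
  have hcont : ContinuousOn (fun s : ℝ ↦ -s ^ p) (Ici 0) :=
    (continuousOn_id.rpow_const fun _ _ ↦ Or.inr hp₀).neg
  have himage : Convex ℝ ((fun s : ℝ ↦ -s ^ p) '' Ici 0) :=
    (isPreconnected_Ici.image _ hcont).ordConnected.convex
  exact (convexOn_exp.subset (subset_univ _) himage).comp (concaveOn_rpow hp₀ hp₁).neg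
    (exp_monotone.monotoneOn _)

theorem rpow_neg_log_nonneg {u : ℝ} (hu₀ : 0 ≤ u) (hu : u ≤ 1) (ρ : ℝ) : 0 ≤ (-log u) ^ ρ :=
  rpow_nonneg (neg_nonneg.2 (log_nonpos hu₀ hu)) ρ

theorem antitoneOn_rpow_neg_log {ρ : ℝ} (hρ : 0 ≤ ρ) :
    AntitoneOn (fun u : ℝ ↦ (-log u) ^ ρ) (Ioc 0 1) := fun _ hu _ hv huv ↦
  rpow_le_rpow (neg_nonneg.2 (log_nonpos (hu.1.le.trans huv) hv.2))
    (neg_le_neg (log_le_log hu.1 huv)) hρ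

/-- For every ρ ≥ 1, the bivariate Gumbel copula
`C(u,v) = exp(-((-log u)^ρ + (-log v)^ρ)^{1/ρ})` is 2-increasing on `(0,1] × (0,1]`. -/
theorem gumbel_two_increasing (ρ : ℝ) (hρ : 1 ≤ ρ)
    (C : ℝ → ℝ → ℝ)
    (hC : ∀ u v : ℝ,
      C u v = Real.exp (-((-Real.log u) ^ ρ + (-Real.log v) ^ ρ) ^ (1 / ρ)))
    (a₁ b₁ a₂ b₂ : ℝ)
    (ha₁ : 0 < a₁) (hab₁ : a₁ ≤ b₁) (hb₁ : b₁ ≤ 1)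
    (ha₂ : 0 < a₂) (hab₂ : a₂ ≤ b₂) (hb₂ : b₂ ≤ 1) :
    0 ≤ C b₁ b₂ - C a₁ b₂ - C b₁ a₂ + C a₁ a₂ := by
  have hρ₀ : 0 ≤ ρ := by linarith
  have hconvex := convexOn_exp_neg_rpow (inv_nonneg.2 hρ₀) (inv_le_one_of_one_le₀ hρ)
  have hanti := antitoneOn_rpow_neg_log hρ₀
  have key := hconvex.map_add_add_le
    (hanti ⟨ha₁, hab₁.trans hb₁⟩ ⟨ha₁.trans_le hab₁, hb₁⟩ hab₁)
    (hanti ⟨ha₂, hab₂.trans hb₂⟩ ⟨ha₂.trans_le hab₂, hb₂⟩ hab₂)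
    (add_nonneg (rpow_neg_log_nonneg (ha₁.le.trans hab₁) hb₁ ρ)
      (rpow_neg_log_nonneg (ha₂.le.trans hab₂) hb₂ ρ))
    (add_nonneg (rpow_neg_log_nonneg ha₁.le (hab₁.trans hb₁) ρ)
      (rpow_neg_log_nonneg ha₂.le (hab₂.trans hb₂) ρ))
  simp only [hC, one_div] at key ⊢
  linarith
end
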